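/- arXiv:2210.13497 — 5 statements merged into one kernel-verified Lean document; each statement's English description precedes it below -/
import Mathlib

section
/- Variant of the Davis–Kahan sin θ theorem: Let A and Â be symmetric d×d real matrices, let λ_i denote the i-th largest eigenvalue of A, and for a positive integer k < d assume λ_k > λ_{k+1}. Let θ be the maximum principal angle between the subspaces spanned by the top-k eigenvectors of A and of Â. Then sin θ ≤ 2‖A − Â‖ / (λ_k − λ_{k+1}), where ‖·‖ is the spectral norm. -/
open Matrix

/-- The spectral norm (ℓ²→ℓ² operator norm) of a real matrix. -/
noncomputable def specNorm {d₁ d₂ : ℕ} (A : Matrix (Fin d₁) (Fin d₂) ℝ) : ℝ :=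
  ‖LinearMap.toContinuousLinearMap (Matrix.toEuclideanLin A)‖

/-!
Let `U`, `V` be the orthogonal projections onto the top-`k` eigenspaces of `A` and `Â`, and put
`ε = ‖A - Â‖`, `g = λₖ - λₖ₊₁`. Since `‖U - V‖ ≤ max ‖(1 - V) U‖ ‖(1 - U) V‖`, it suffices to bound
`s = ‖(1 - U) V‖`, the other term being symmetric. The Sylvester-equation argument of Davis and
Kahan gives `(λ̂ₖ - λₖ₊₁) s ≤ ‖(1 - U) (A - Â) V‖ ≤ ε`, and Weyl's inequality `λₖ ≤ λ̂ₖ + ε` turns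
this into `(g - ε) s ≤ ε`. As also `s ≤ 1`, we get `g s ≤ ε (1 + s) ≤ 2 ε` without distinguishing
small and large `ε`.
-/

open scoped RealInnerProductSpace
open ContinuousLinearMap Metric

theorem le_two_mul_div_of_mul_le {s ε g γ : ℝ} (hg : 0 < g) (hε : 0 ≤ ε) (hs₀ : 0 ≤ s)
    (hs₁ : s ≤ 1) (hγ : g - ε ≤ γ) (h : γ * s ≤ ε) : s ≤ 2 * ε / g := by
  rw [le_div_iff₀ hg]
  nlinarith [mul_nonneg (sub_nonneg.2 hγ) hs₀, mul_nonneg hε (sub_nonneg.2 hs₁)]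

theorem IsStarProjection.norm_mul_le_one {R : Type*} [NonUnitalNormedRing R] [StarRing R]
    [CStarRing R] {p q : R} (hp : IsStarProjection p) (hq : IsStarProjection q) :
    ‖p * q‖ ≤ 1 :=
  (norm_mul_le _ _).trans (mul_le_one₀ (hp.norm_le p) (norm_nonneg _) (hq.norm_le q))

theorem IsStarProjection.norm_mul_mul_le {R : Type*} [NonUnitalNormedRing R] [StarRing R]
    [CStarRing R] {p q : R} (hp : IsStarProjection p) (hq : IsStarProjection q) (a : R) :
    ‖p * a * q‖ ≤ ‖a‖ :=
  calc ‖p * a * q‖ ≤ ‖p‖ * ‖a‖ * ‖q‖ := norm_mul₃_le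
    _ ≤ 1 * ‖a‖ * 1 := by gcongr; exacts [hp.norm_le p, hq.norm_le q]
    _ = ‖a‖ := by ring

section Operator

variable {E : Type*} [NormedAddCommGroup E] [InnerProductSpace ℝ E]

theorem ContinuousLinearMap.exists_norm_eq_one_norm_apply_eq_opNorm [FiniteDimensional ℝ E]
    [Nontrivial E] {F : Type*} [NormedAddCommGroup F] [NormedSpace ℝ F] (f : E →L[ℝ] F) :
    ∃ v, ‖v‖ = 1 ∧ ‖f v‖ = ‖f‖ := by
  have hK : IsCompact ((fun x => ‖f x‖) '' sphere (0 : E) 1) :=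
    (isCompact_sphere 0 1).image (by fun_prop)
  have hmem := hK.sSup_mem ((NormedSpace.sphere_nonempty.2 zero_le_one).image _)
  rw [f.sSup_sphere_eq_norm] at hmem
  obtain ⟨v, hv, hfv⟩ := hmem
  exact ⟨v, mem_sphere_zero_iff_norm.1 hv, hfv⟩

/-- `⟪T† T v, v⟫ = ‖T‖ ^ 2` while `‖T† T v‖ ≤ ‖T‖ ^ 2`, so `‖T† T v - ‖T‖ ^ 2 • v‖ ^ 2 ≤ 0`. -/
theorem ContinuousLinearMap.adjoint_apply_apply_eq_of_norm_apply_eq [CompleteSpace E]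
    {F : Type*} [NormedAddCommGroup F] [InnerProductSpace ℝ F] [CompleteSpace F]
    (T : E →L[ℝ] F) {v : E} (hv : ‖v‖ = 1) (hTv : ‖T v‖ = ‖T‖) :
    adjoint T (T v) = ‖T‖ ^ 2 • v := by
  have hinner : ⟪adjoint T (T v), v⟫ = ‖T‖ ^ 2 := by
    rw [adjoint_inner_left, real_inner_self_eq_norm_sq, hTv]
  have hnorm : ‖adjoint T (T v)‖ ≤ ‖T‖ ^ 2 := by
    calc _ ≤ ‖adjoint T‖ * ‖T v‖ := le_opNorm _ _
      _ = ‖T‖ ^ 2 := by rw [LinearIsometryEquiv.norm_map, hTv, sq]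
  rw [← sub_eq_zero, ← norm_eq_zero, ← sq_eq_zero_iff]
  refine le_antisymm ?_ (sq_nonneg _)
  rw [norm_sub_sq_real, inner_smul_right, hinner, norm_smul, hv, Real.norm_of_nonneg (sq_nonneg _)]
  nlinarith [norm_nonneg (adjoint T (T v))]

theorem ContinuousLinearMap.exists_top_singular_vector [FiniteDimensional ℝ E] {T : E →L[ℝ] E}
    (hT : T ≠ 0) : ∃ v, ‖v‖ = 1 ∧ ‖T v‖ = ‖T‖ ∧ adjoint T (T v) = ‖T‖ ^ 2 • v := by
  obtain ⟨y, hy⟩ : ∃ y, T y ≠ 0 := by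
    by_contra! h
    exact hT (ext h)
  have : Nontrivial E := nontrivial_of_ne y 0 fun h => hy (by rw [h, map_zero])
  obtain ⟨v, hv, hTv⟩ := T.exists_norm_eq_one_norm_apply_eq_opNorm
  exact ⟨v, hv, hTv, T.adjoint_apply_apply_eq_of_norm_apply_eq hv hTv⟩

theorem IsStarProjection.inner_apply_one_sub_apply [CompleteSpace E] {p : E →L[ℝ] E}
    (hp : IsStarProjection p) (x y : E) : ⟪p x, (1 - p) y⟫ = 0 := by
  rw [← adjoint_inner_right, ← star_eq_adjoint, hp.isSelfAdjoint.star_eq,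
    ← mul_apply_eq_comp, hp.mul_one_sub_self, _root_.zero_apply, inner_zero_right]

theorem IsStarProjection.norm_sq_add_norm_sq [CompleteSpace E] {p : E →L[ℝ] E}
    (hp : IsStarProjection p) (x : E) : ‖p x‖ ^ 2 + ‖(1 - p) x‖ ^ 2 = ‖x‖ ^ 2 := by
  have h := norm_add_sq_real (p x) ((1 - p) x)
  rw [hp.inner_apply_one_sub_apply, mul_zero, add_zero] at h
  rw [← h, _root_.sub_apply, one_apply_eq_self, add_sub_cancel]

/-- Write `p - q = p (1 - q) - (1 - p) q`: the two terms have orthogonal ranges and act on the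
orthogonal pieces `(1 - q) x` and `q x` of `x`. -/
theorem IsStarProjection.norm_sub_le_max [CompleteSpace E] {p q : E →L[ℝ] E}
    (hp : IsStarProjection p) (hq : IsStarProjection q) :
    ‖p - q‖ ≤ max ‖(1 - q) * p‖ ‖(1 - p) * q‖ := by
  set a := ‖(1 - q) * p‖
  set b := ‖(1 - p) * q‖
  refine opNorm_le_bound _ ((norm_nonneg _).trans (le_max_left a b)) fun x => ?_
  have hstar : star ((1 - q) * p) = p * (1 - q) := by
    rw [star_mul, hp.isSelfAdjoint.star_eq, hq.one_sub.isSelfAdjoint.star_eq]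
  have ha : ‖p ((1 - q) x)‖ ≤ a * ‖(1 - q) x‖ := by
    calc ‖p ((1 - q) x)‖ = ‖(p * (1 - q)) ((1 - q) x)‖ := by
          rw [mul_apply_eq_comp, ← mul_apply_eq_comp (1 - q),
            hq.one_sub.isIdempotentElem.eq]
      _ ≤ ‖p * (1 - q)‖ * ‖(1 - q) x‖ := le_opNorm _ _
      _ = a * ‖(1 - q) x‖ := by rw [← hstar, norm_star ((1 - q) * p)]
  have hb : ‖(1 - p) (q x)‖ ≤ b * ‖q x‖ := by
    calc ‖(1 - p) (q x)‖ = ‖((1 - p) * q) (q x)‖ := by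
          rw [mul_apply_eq_comp, ← mul_apply_eq_comp q,
            hq.isIdempotentElem.eq]
      _ ≤ b * ‖q x‖ := le_opNorm _ _
  have hsplit : (p - q) x = p ((1 - q) x) - (1 - p) (q x) := by
    simp only [_root_.sub_apply, one_apply_eq_self, map_sub]
    abel
  have hpyth : ‖(p - q) x‖ ^ 2 = ‖p ((1 - q) x)‖ ^ 2 + ‖(1 - p) (q x)‖ ^ 2 := by
    rw [hsplit, norm_sub_sq_real, hp.inner_apply_one_sub_apply, mul_zero, sub_zero]
  set m := max a b
  refine (sq_le_sq₀ (norm_nonneg _) (by positivity)).1 ?_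
  calc ‖(p - q) x‖ ^ 2 = ‖p ((1 - q) x)‖ ^ 2 + ‖(1 - p) (q x)‖ ^ 2 := hpyth
    _ ≤ (m * ‖(1 - q) x‖) ^ 2 + (m * ‖q x‖) ^ 2 := by
        gcongr
        exacts [ha.trans (by gcongr; exact le_max_left a b),
          hb.trans (by gcongr; exact le_max_right a b)]
    _ = (m * ‖x‖) ^ 2 := by rw [mul_pow, mul_pow, mul_pow, ← hq.norm_sq_add_norm_sq x]; ring

/-- The sine-theta estimate of Davis and Kahan in Sylvester-equation form. If `q` reduces `A`
and `p` reduces `B`, then `q (A - B) p = A X - X B` for `X = q p`; testing it against a top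
singular pair `(X v, v)` of `X` separates the two Rayleigh quotients by `β - α`. -/
theorem sub_mul_norm_mul_le_norm_mul_sub_mul [FiniteDimensional ℝ E] {A B q p : E →L[ℝ] E}
    (hq : IsStarProjection q) (hp : IsStarProjection p) (hAq : Commute A q) (hBp : Commute B p)
    {α β : ℝ} (hA : ∀ x, q x = x → ⟪x, A x⟫ ≤ α * ‖x‖ ^ 2)
    (hB : ∀ x, p x = x → β * ‖x‖ ^ 2 ≤ ⟪x, B x⟫) :
    (β - α) * ‖q * p‖ ≤ ‖q * (A - B) * p‖ := by
  set X := q * p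
  have hM : q * (A - B) * p = A * X - X * B := by
    rw [mul_sub, sub_mul, ← hAq.eq, mul_assoc A, mul_assoc q B, hBp.eq]
    simp only [X, mul_assoc]
  set M := q * (A - B) * p
  rcases eq_or_ne X 0 with hX | hX
  · rw [hX, norm_zero, mul_zero]
    exact norm_nonneg _
  obtain ⟨v, hv, hXv, heig⟩ := X.exists_top_singular_vector hX
  set s := ‖X‖
  have hs : 0 < s := norm_pos_iff.2 hX
  have hadj : adjoint X = p * q := by
    rw [← star_eq_adjoint, star_mul, hp.isSelfAdjoint.star_eq, hq.isSelfAdjoint.star_eq]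
  have hpv : p v = v := by
    have h : p (adjoint X (X v)) = adjoint X (X v) := by
      rw [hadj, ← mul_apply_eq_comp, ← mul_assoc, hp.isIdempotentElem.eq]
    rw [heig, map_smul] at h
    exact smul_right_injective E (by positivity) h
  have hqXv : q (X v) = X v := by
    rw [← mul_apply_eq_comp, ← mul_assoc, hq.isIdempotentElem.eq]
  have hMv : ⟪X v, M v⟫ = ⟪X v, A (X v)⟫ - s ^ 2 * ⟪v, B v⟫ := by
    rw [hM, _root_.sub_apply, inner_sub_right, mul_apply_eq_comp A X v, mul_apply_eq_comp X B v,
      ← adjoint_inner_left X, heig, real_inner_smul_left]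
  have hupper : ⟪X v, M v⟫ ≤ s ^ 2 * (α - β) := by
    have h1 := hA (X v) hqXv
    have h2 := hB v hpv
    rw [hXv] at h1
    rw [hv] at h2
    rw [hMv]
    nlinarith
  have hlower : -(s * ‖M‖) ≤ ⟪X v, M v⟫ := by
    refine neg_le_of_abs_le ((abs_real_inner_le_norm _ _).trans ?_)
    calc ‖X v‖ * ‖M v‖ ≤ s * (‖M‖ * ‖v‖) := by rw [hXv]; gcongr; exact le_opNorm _ _
      _ = s * ‖M‖ := by rw [hv, mul_one]
  nlinarith

end Operator

noncomputable def Matrix.diagonalStarAlgHom (n R : Type*) [Fintype n] [DecidableEq n]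
    [CommSemiring R] [StarRing R] : (n → R) →⋆ₐ[R] Matrix n n R :=
  { diagonalAlgHom R with map_star' := fun v => (diagonal_conjTranspose v).symm }

section Spectral

variable {n : Type*} [Fintype n] [DecidableEq n]

theorem Matrix.toEuclideanCLM_transpose (M : Matrix n n ℝ) :
    toEuclideanCLM (𝕜 := ℝ) Mᵀ = adjoint (toEuclideanCLM (𝕜 := ℝ) M) := by
  rw [← conjTranspose_eq_transpose_of_trivial, ← star_eq_conjTranspose, map_star,
    star_eq_adjoint]

/-- `w ↦ P diag(w) Pᵀ`, acting on Euclidean space: the functional calculus of the symmetric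
matrices diagonalised by `P`. -/
noncomputable def conjDiagonal {P : Matrix n n ℝ} (hP : P ∈ orthogonalGroup n ℝ) :
    (n → ℝ) →⋆ₐ[ℝ] (EuclideanSpace ℝ n →L[ℝ] EuclideanSpace ℝ n) :=
  (toEuclideanCLM.toStarAlgHom.comp (Unitary.conjStarAlgAut ℝ _ ⟨P, hP⟩).toStarAlgHom).comp
    (diagonalStarAlgHom n ℝ)

variable {P : Matrix n n ℝ} (hP : P ∈ orthogonalGroup n ℝ)
include hP

theorem conjDiagonal_apply (w : n → ℝ) :
    conjDiagonal hP w = toEuclideanCLM (𝕜 := ℝ) (P * diagonal w * Pᵀ) := by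
  change toEuclideanCLM (𝕜 := ℝ) (P * diagonal w * star P) = _
  rw [star_eq_conjTranspose, conjTranspose_eq_transpose_of_trivial]

theorem norm_toEuclideanCLM_transpose_apply (x : EuclideanSpace ℝ n) :
    ‖toEuclideanCLM (𝕜 := ℝ) Pᵀ x‖ = ‖x‖ := by
  refine norm_map_of_mem_unitary ?_ x
  rw [← conjTranspose_eq_transpose_of_trivial, ← star_eq_conjTranspose]
  exact Unitary.map_mem _ (Unitary.star_mem hP)

theorem inner_conjDiagonal_apply (w : n → ℝ) (x : EuclideanSpace ℝ n) :
    ⟪x, conjDiagonal hP w x⟫ = ∑ i, w i * toEuclideanCLM (𝕜 := ℝ) Pᵀ x i ^ 2 := by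
  simp only [conjDiagonal_apply, map_mul, mul_apply_eq_comp]
  rw [← adjoint_inner_left, ← toEuclideanCLM_transpose, PiLp.inner_apply]
  refine Finset.sum_congr rfl fun i _ => ?_
  simp only [ofLp_toEuclideanCLM, mulVec_diagonal, RCLike.inner_apply, Real.ringHom_apply]
  ring

theorem inner_conjDiagonal_apply_le (w : n → ℝ) {θ : ℝ} {x : EuclideanSpace ℝ n}
    (hx : ∀ i, θ < w i → toEuclideanCLM (𝕜 := ℝ) Pᵀ x i = 0) :
    ⟪x, conjDiagonal hP w x⟫ ≤ θ * ‖x‖ ^ 2 := by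
  rw [inner_conjDiagonal_apply hP, ← norm_toEuclideanCLM_transpose_apply hP x,
    EuclideanSpace.norm_sq_eq, Finset.mul_sum]
  refine Finset.sum_le_sum fun i _ => ?_
  rw [Real.norm_eq_abs, sq_abs]
  rcases le_or_gt (w i) θ with h | h
  · exact mul_le_mul_of_nonneg_right h (sq_nonneg _)
  · simp [hx i h]

theorem le_inner_conjDiagonal_apply (w : n → ℝ) {θ : ℝ} {x : EuclideanSpace ℝ n}
    (hx : ∀ i, w i < θ → toEuclideanCLM (𝕜 := ℝ) Pᵀ x i = 0) :
    θ * ‖x‖ ^ 2 ≤ ⟪x, conjDiagonal hP w x⟫ := by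
  have h := inner_conjDiagonal_apply_le hP (-w) (θ := -θ) fun i hi => hx i (neg_lt_neg_iff.1 hi)
  rw [map_neg, _root_.neg_apply, inner_neg_right] at h
  linarith

theorem toEuclideanCLM_transpose_apply_eq_zero_of_conjDiagonal_apply_eq_smul {w : n → ℝ} {c : ℝ}
    {x : EuclideanSpace ℝ n} (hx : conjDiagonal hP w x = c • x) {i : n} (hi : w i ≠ c) :
    toEuclideanCLM (𝕜 := ℝ) Pᵀ x i = 0 := by
  have hPP : Pᵀ * P = 1 := (mem_orthogonalGroup_iff' n ℝ).1 hP
  have h := congrArg (fun y => toEuclideanCLM (𝕜 := ℝ) Pᵀ y i) hx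
  simp only [conjDiagonal_apply, ← mul_apply_eq_comp, ← map_mul, ← mul_assoc, hPP, one_mul,
    map_smul] at h
  simpa [mulVec_diagonal, hi] using h

end Spectral

theorem Matrix.exists_ne_zero_mulVec_apply_eq_zero {K : Type*} [Field K] {d : ℕ}
    (M : Matrix (Fin d) (Fin d) K) (m : Fin d) :
    ∃ c ≠ 0, (∀ i, m < i → c i = 0) ∧ ∀ i, i < m → (M *ᵥ c) i = 0 := by
  -- rows `< m` are the equations, rows `> m` force `cᵢ = 0`, the zero row `m` makes `G` singular
  let G : Matrix (Fin d) (Fin d) K :=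
    of fun i j => if i < m then M i j else if i = m then 0 else (1 : Matrix (Fin d) (Fin d) K) i j
  have hG : G.det = 0 := det_eq_zero_of_row_eq_zero m fun j => by simp [G]
  obtain ⟨c, hc, hGc⟩ := exists_mulVec_eq_zero_iff.2 hG
  refine ⟨c, hc, fun i hi => ?_, fun i hi => ?_⟩
  · simpa [G, mulVec, dotProduct, hi.not_gt, hi.ne', one_apply] using congrFun hGc i
  · simpa [G, mulVec, dotProduct, hi] using congrFun hGc i

def topIndicator (d k : ℕ) : Fin d → ℝ := fun i => if (i : ℕ) < k then 1 else 0

theorem isStarProjection_topIndicator (d k : ℕ) : IsStarProjection (topIndicator d k) := by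
  refine ⟨?_, IsSelfAdjoint.all _⟩
  show topIndicator d k * topIndicator d k = topIndicator d k
  funext i
  by_cases h : (i : ℕ) < k <;> simp [topIndicator, h]

theorem submatrix_castLE_mul_transpose {d k : ℕ} (P : Matrix (Fin d) (Fin d) ℝ) (h : k ≤ d) :
    P.submatrix id (Fin.castLE h) * (P.submatrix id (Fin.castLE h))ᵀ
      = P * diagonal (topIndicator d k) * Pᵀ := by
  ext i j
  rw [mul_apply, mul_apply]
  simp only [mul_diagonal, submatrix_apply, transpose_apply, id]
  refine Fintype.sum_of_injective (Fin.castLE h) (Fin.castLE_injective h) _ _ (fun t ht => ?_)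
    fun s => by simp [topIndicator, s.isLt]
  have : ¬ (t : ℕ) < k := fun htk => ht ⟨⟨t, htk⟩, rfl⟩
  simp [topIndicator, this]

section Perturbation

variable {d : ℕ} {P Q : Matrix (Fin d) (Fin d) ℝ} (hP : P ∈ orthogonalGroup (Fin d) ℝ)
  (hQ : Q ∈ orthogonalGroup (Fin d) ℝ) {lam mu : Fin d → ℝ}

include hP hQ

theorem specNorm_sub_eq_norm_conjDiagonal_sub (w v : Fin d → ℝ) :
    specNorm (P * diagonal w * Pᵀ - Q * diagonal v * Qᵀ)
      = ‖conjDiagonal hP w - conjDiagonal hQ v‖ := by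
  rw [conjDiagonal_apply, conjDiagonal_apply, ← map_sub]
  rfl

/-- Weyl's inequality, by the Courant–Fischer argument: some nonzero vector lies both in the span of
the top `m + 1` eigenvectors of `Q diag(μ) Qᵀ` and in the span of the bottom `d - m` eigenvectors
of `P diag(λ) Pᵀ`. -/
theorem le_add_norm_conjDiagonal_sub (hlam : Antitone lam) (hmu : Antitone mu) (m : Fin d) :
    mu m ≤ lam m + ‖conjDiagonal hQ mu - conjDiagonal hP lam‖ := by
  obtain ⟨c, hc, hcm, hMc⟩ := (Pᵀ * Q).exists_ne_zero_mulVec_apply_eq_zero m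
  set x := toEuclideanCLM (𝕜 := ℝ) Q (WithLp.toLp 2 c)
  have hQx : toEuclideanCLM (𝕜 := ℝ) Qᵀ x = WithLp.toLp 2 c := by
    rw [← mul_apply_eq_comp, ← map_mul, (mem_orthogonalGroup_iff' _ ℝ).1 hQ, map_one,
      one_apply_eq_self]
  have hPx : toEuclideanCLM (𝕜 := ℝ) Pᵀ x = WithLp.toLp 2 ((Pᵀ * Q) *ᵥ c) := by
    rw [← mul_apply_eq_comp, ← map_mul, toEuclideanCLM_toLp]
  have hx : 0 < ‖x‖ ^ 2 := by
    rw [← norm_toEuclideanCLM_transpose_apply hQ, hQx]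
    exact pow_pos (norm_pos_iff.2 fun h => hc (congrArg WithLp.ofLp h)) 2
  have hmu_x : mu m * ‖x‖ ^ 2 ≤ ⟪x, conjDiagonal hQ mu x⟫ :=
    le_inner_conjDiagonal_apply hQ mu fun i hi => by rw [hQx]; exact hcm i (hmu.reflect_lt hi)
  have hlam_x : ⟪x, conjDiagonal hP lam x⟫ ≤ lam m * ‖x‖ ^ 2 :=
    inner_conjDiagonal_apply_le hP lam fun i hi => by rw [hPx]; exact hMc i (hlam.reflect_lt hi)
  set T := conjDiagonal hQ mu - conjDiagonal hP lam
  have hT : ⟪x, T x⟫ ≤ ‖T‖ * ‖x‖ ^ 2 :=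
    calc ⟪x, T x⟫ ≤ ‖x‖ * (‖T‖ * ‖x‖) :=
          (real_inner_le_norm _ _).trans (by gcongr; exact le_opNorm _ _)
      _ = ‖T‖ * ‖x‖ ^ 2 := by ring
  rw [_root_.sub_apply, inner_sub_right] at hT
  exact le_of_mul_le_mul_right (by linarith) hx

/-- Indices are `0`-based: the gap `μ ⟨k - 1⟩ - λ ⟨k⟩` is `μₖ - λₖ₊₁` in the usual numbering. -/
theorem sub_mul_norm_one_sub_mul_le {k : ℕ} (hkd : k < d) (hlam : Antitone lam)
    (hmu : Antitone mu) :
    (mu ⟨k - 1, (Nat.sub_le k 1).trans_lt hkd⟩ - lam ⟨k, hkd⟩) *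
        ‖(1 - conjDiagonal hP (topIndicator d k)) * conjDiagonal hQ (topIndicator d k)‖
      ≤ ‖conjDiagonal hP lam - conjDiagonal hQ mu‖ := by
  have hι := isStarProjection_topIndicator d k
  have hq := (hι.map (conjDiagonal hP)).one_sub
  have hp := hι.map (conjDiagonal hQ)
  have hAq := (Commute.one_right _).sub_right ((Commute.all lam (topIndicator d k)).map
    (conjDiagonal hP))
  have hBp := (Commute.all mu (topIndicator d k)).map (conjDiagonal hQ)
  refine (sub_mul_norm_mul_le_norm_mul_sub_mul hq hp hAq hBp (fun x hx => ?_)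
    (fun x hx => ?_)).trans (hq.norm_mul_mul_le hp _)
  · have hx0 : conjDiagonal hP (topIndicator d k) x = (0 : ℝ) • x := by
      rw [zero_smul]
      rwa [_root_.sub_apply, one_apply_eq_self, sub_eq_self] at hx
    refine inner_conjDiagonal_apply_le hP lam fun i hi =>
      toEuclideanCLM_transpose_apply_eq_zero_of_conjDiagonal_apply_eq_smul hP hx0 ?_
    have : (i : ℕ) < k := Fin.lt_def.1 (hlam.reflect_lt hi)
    simp [topIndicator, this]
  · refine le_inner_conjDiagonal_apply hQ mu fun i hi =>
      toEuclideanCLM_transpose_apply_eq_zero_of_conjDiagonal_apply_eq_smul hQ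
        (c := 1) (by rwa [one_smul]) ?_
    have : ¬ (i : ℕ) < k := by
      have := Fin.lt_def.1 (hmu.reflect_lt hi)
      rw [Fin.val_mk] at this
      omega
    simp [topIndicator, this]

end Perturbation

/-- Variant of the Davis–Kahan `sin θ` theorem. Let `A, Â` be symmetric `d×d`
real matrices with eigendecompositions `A = P diag(λ) Pᵀ` and `Â = P̂ diag(λ̂) P̂ᵀ`, where
`P, P̂` are orthogonal and `λ, λ̂` are listed in nonincreasing order (so `λ` enumerates the
eigenvalues of `A` from largest to smallest). Suppose `0 < k < d` and `λ_k > λ_{k+1}`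
(with 1-based indexing, i.e. `lam ⟨k-1⟩ > lam ⟨k⟩` in 0-based indexing). The subspaces
spanned by the top-`k` eigenvectors of `A` and `Â` are the column spans of the first `k`
columns `U₁` of `P` and `Û₁` of `P̂`; the sine of the maximum principal angle `θ` between
them is `‖U₁U₁ᵀ − Û₁Û₁ᵀ‖`. Then `sin θ ≤ 2‖A − Â‖ / (λ_k − λ_{k+1})`. -/
theorem stmt1 {d k : ℕ} (hkd : k < d)
    (A Ah P Ph : Matrix (Fin d) (Fin d) ℝ) (lam lamh : Fin d → ℝ)
    (hP : P ∈ Matrix.orthogonalGroup (Fin d) ℝ)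
    (hPh : Ph ∈ Matrix.orthogonalGroup (Fin d) ℝ)
    (hlam : Antitone lam) (hlamh : Antitone lamh)
    (hA : A = P * Matrix.diagonal lam * Pᵀ)
    (hAh : Ah = Ph * Matrix.diagonal lamh * Phᵀ)
    (hgap : lam ⟨k, hkd⟩ < lam ⟨k - 1, by omega⟩) :
    specNorm ((P.submatrix id (Fin.castLE hkd.le)) * (P.submatrix id (Fin.castLE hkd.le))ᵀ
        - (Ph.submatrix id (Fin.castLE hkd.le)) * (Ph.submatrix id (Fin.castLE hkd.le))ᵀ)
      ≤ 2 * specNorm (A - Ah) / (lam ⟨k - 1, by omega⟩ - lam ⟨k, hkd⟩) := by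
  rw [submatrix_castLE_mul_transpose, submatrix_castLE_mul_transpose, hA, hAh,
    specNorm_sub_eq_norm_conjDiagonal_sub hP hPh, specNorm_sub_eq_norm_conjDiagonal_sub hP hPh]
  set U := conjDiagonal hP (topIndicator d k)
  set V := conjDiagonal hPh (topIndicator d k)
  have hU := (isStarProjection_topIndicator d k).map (conjDiagonal hP)
  have hV := (isStarProjection_topIndicator d k).map (conjDiagonal hPh)
  have hUV := sub_mul_norm_one_sub_mul_le hP hPh hkd hlam hlamh
  have hVU := sub_mul_norm_one_sub_mul_le hPh hP hkd hlamh hlam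
  have hweyl₁ := le_add_norm_conjDiagonal_sub hPh hP hlamh hlam ⟨k - 1, by omega⟩
  have hweyl₂ := le_add_norm_conjDiagonal_sub hP hPh hlam hlamh ⟨k, hkd⟩
  rw [norm_sub_rev] at hVU hweyl₂
  have hg : 0 < lam ⟨k - 1, by omega⟩ - lam ⟨k, hkd⟩ := sub_pos.2 hgap
  calc ‖U - V‖ ≤ max ‖(1 - V) * U‖ ‖(1 - U) * V‖ := hU.norm_sub_le_max hV
    _ ≤ _ := max_le
      (le_two_mul_div_of_mul_le hg (norm_nonneg _) (norm_nonneg _)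
        (hV.one_sub.norm_mul_le_one hU) (by linarith) hVU)
      (le_two_mul_div_of_mul_le hg (norm_nonneg _) (norm_nonneg _)
        (hU.one_sub.norm_mul_le_one hV) (by linarith) hUV)
end

section
/- KL divergence between spiked Gaussians: For σ ≥ 0, η > 0, and U, Û ∈ O_{d,k} (i.e., d×k matrices with orthonormal columns), define Σ = σ²UU^T + η²I and Σ̂ = σ²ÛÛ^T + η²I. Then the KL divergence between the mean-zero Gaussians N(0, Σ̂) and N(0, Σ) equals σ⁴‖UU^T − ÛÛ^T‖_F² / (4(σ²η² + η⁴)). -/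
open Matrix

/-- KL divergence between spiked Gaussians. For `σ ≥ 0`, `η > 0`, and
`U, Û ∈ O_{d,k}`, with `Σ = σ²UUᵀ + η²I` and `Σ̂ = σ²ÛÛᵀ + η²I`, the KL divergence
`(1/2)(tr(Σ⁻¹Σ̂) − d + log(det Σ / det Σ̂))` between `N(0, Σ̂)` and `N(0, Σ)` equals
`σ⁴‖UUᵀ − ÛÛᵀ‖_F² / (4(σ²η² + η⁴))`. -/
theorem stmt2 {d k : ℕ} (σ η : ℝ) (hσ : 0 ≤ σ) (hη : 0 < η)
    (U Uh : Matrix (Fin d) (Fin k) ℝ) (hU : Uᵀ * U = 1) (hUh : Uhᵀ * Uh = 1) :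
    (1 / 2 : ℝ) *
        (Matrix.trace ((σ ^ 2 • (U * Uᵀ) + η ^ 2 • (1 : Matrix (Fin d) (Fin d) ℝ))⁻¹ *
            (σ ^ 2 • (Uh * Uhᵀ) + η ^ 2 • (1 : Matrix (Fin d) (Fin d) ℝ)))
          - d
          + Real.log ((σ ^ 2 • (U * Uᵀ) + η ^ 2 • (1 : Matrix (Fin d) (Fin d) ℝ)).det /
              (σ ^ 2 • (Uh * Uhᵀ) + η ^ 2 • (1 : Matrix (Fin d) (Fin d) ℝ)).det))
      = σ ^ 4 * (∑ i, ∑ j, ((U * Uᵀ - Uh * Uhᵀ) i j) ^ 2) /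
          (4 * (σ ^ 2 * η ^ 2 + η ^ 4)) := by
  have hη2 : (η : ℝ) ^ 2 ≠ 0 := pow_ne_zero _ hη.ne'
  have hs : σ ^ 2 + η ^ 2 ≠ 0 := by positivity
  have hs2 : σ ^ 2 * η ^ 2 + η ^ 4 ≠ 0 := by positivity
  set P := U * Uᵀ with hP
  set Q := Uh * Uhᵀ with hQ
  have hPP : P * P = P := by
    rw [hP, Matrix.mul_assoc, ← Matrix.mul_assoc Uᵀ U, hU, Matrix.one_mul]
  have hQQ : Q * Q = Q := by
    rw [hQ, Matrix.mul_assoc, ← Matrix.mul_assoc Uhᵀ Uh, hUh, Matrix.one_mul]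
  set c : ℝ := σ ^ 2 / (η ^ 2 * (σ ^ 2 + η ^ 2)) with hc
  set B : Matrix (Fin d) (Fin d) ℝ := (η ^ 2)⁻¹ • 1 - c • P with hB
  have hinv : (σ ^ 2 • P + η ^ 2 • (1 : Matrix (Fin d) (Fin d) ℝ)) * B = 1 := by
    rw [hB]
    simp only [Matrix.mul_sub, Matrix.add_mul, Matrix.smul_mul, Matrix.mul_smul,
      Matrix.one_mul, Matrix.mul_one, hPP, smul_smul]
    match_scalars <;> (try simp only [hc]) <;> field_simp <;> (try ring)
  have hSinv : (σ ^ 2 • P + η ^ 2 • (1 : Matrix (Fin d) (Fin d) ℝ))⁻¹ = B :=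
    Matrix.inv_eq_right_inv hinv
  have htrP : Matrix.trace P = (k : ℝ) := by
    rw [hP, Matrix.trace_mul_comm, hU, Matrix.trace_one]; simp
  have htrQ : Matrix.trace Q = (k : ℝ) := by
    rw [hQ, Matrix.trace_mul_comm, hUh, Matrix.trace_one]; simp
  set t : ℝ := Matrix.trace (P * Q) with ht
  have htr : Matrix.trace (B * (σ ^ 2 • Q + η ^ 2 • (1 : Matrix (Fin d) (Fin d) ℝ)))
      = (η ^ 2)⁻¹ * (η ^ 2 * d + σ ^ 2 * k) - c * (η ^ 2 * k + σ ^ 2 * t) := by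
    rw [hB]
    simp only [Matrix.sub_mul, Matrix.mul_add, Matrix.smul_mul, Matrix.mul_smul,
      Matrix.one_mul, Matrix.mul_one, smul_smul, Matrix.trace_sub, Matrix.trace_add,
      Matrix.trace_smul, htrP, htrQ, Matrix.trace_one, ← ht]
    simp only [smul_eq_mul, Fintype.card_fin]
    ring
  -- determinants
  have hdetV : ∀ V : Matrix (Fin d) (Fin k) ℝ, Vᵀ * V = 1 →
      (σ ^ 2 • (V * Vᵀ) + η ^ 2 • (1 : Matrix (Fin d) (Fin d) ℝ)).det
        = (η ^ 2) ^ d * (1 + σ ^ 2 / η ^ 2) ^ k := by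
    intro V hV
    have h1 : σ ^ 2 • (V * Vᵀ) + η ^ 2 • (1 : Matrix (Fin d) (Fin d) ℝ)
        = η ^ 2 • (1 + ((σ ^ 2 / η ^ 2) • V) * Vᵀ) := by
      rw [Matrix.smul_mul]
      match_scalars <;> field_simp
    rw [h1, Matrix.det_smul, Matrix.det_one_add_mul_comm, Matrix.mul_smul, hV]
    have : (1 : Matrix (Fin k) (Fin k) ℝ) + (σ ^ 2 / η ^ 2) • 1
        = (1 + σ ^ 2 / η ^ 2) • 1 := by
      match_scalars; ring
    rw [this, Matrix.det_smul, Matrix.det_one]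
    simp [Fintype.card_fin]
  have hdet : (σ ^ 2 • P + η ^ 2 • (1 : Matrix (Fin d) (Fin d) ℝ)).det
      = (σ ^ 2 • Q + η ^ 2 • (1 : Matrix (Fin d) (Fin d) ℝ)).det := by
    rw [hP, hQ, hdetV U hU, hdetV Uh hUh]
  have hlog : Real.log ((σ ^ 2 • P + η ^ 2 • (1 : Matrix (Fin d) (Fin d) ℝ)).det /
      (σ ^ 2 • Q + η ^ 2 • (1 : Matrix (Fin d) (Fin d) ℝ)).det) = 0 := by
    rw [hdet]
    rcases eq_or_ne (σ ^ 2 • Q + η ^ 2 • (1 : Matrix (Fin d) (Fin d) ℝ)).det 0 with h | h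
    · simp [h]
    · rw [div_self h, Real.log_one]
  -- Frobenius norm as trace
  have hsym : (P - Q)ᵀ = P - Q := by
    rw [hP, hQ]
    simp [Matrix.transpose_sub, Matrix.transpose_mul]
  have hsum : (∑ i, ∑ j, ((P - Q) i j) ^ 2) = 2 * ((k : ℝ) - t) := by
    have h1 : (∑ i, ∑ j, ((P - Q) i j) ^ 2) = Matrix.trace ((P - Q) * (P - Q)ᵀ) := by
      simp [Matrix.trace, Matrix.mul_apply, Matrix.diag, sq]
    rw [h1, hsym]
    have h2 : (P - Q) * (P - Q) = P * P - P * Q - Q * P + Q * Q := by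
      simp [Matrix.sub_mul, Matrix.mul_sub]; abel
    rw [h2]
    simp only [Matrix.trace_add, Matrix.trace_sub, hPP, hQQ, htrP, htrQ]
    rw [Matrix.trace_mul_comm Q P, ← ht]
    ring
  rw [hSinv, htr, hlog, hsum, hc]
  field_simp
  ring
end

section
/- For σ ≥ 0, η > 0, and U, Û ∈ O_{d,k}, with Σ = σ²UU^T + η²I and Σ̂ = σ²ÛÛ^T + η²I, one has det Σ = det Σ̂ = (σ² + η²)^k · (η²)^{d−k}, and tr(Σ^{-1}Σ̂) − d = σ⁴‖UU^T − ÛÛ^T‖_F² / (2(η²σ² + η⁴)). -/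
open Matrix

private lemma aux_k_le_d {d k : ℕ} (U : Matrix (Fin d) (Fin k) ℝ) (hU : Uᵀ * U = 1) :
    k ≤ d := by
  have h1 : (1 : Matrix (Fin k) (Fin k) ℝ).rank = k := by simp [Matrix.rank_one]
  have h2 : (Uᵀ * U).rank ≤ U.rank := Matrix.rank_mul_le_right _ _
  have h3 : U.rank ≤ d := by simpa using U.rank_le_card_height
  rw [hU, h1] at h2
  omega

private lemma aux_proj_idem {d k : ℕ} (U : Matrix (Fin d) (Fin k) ℝ) (hU : Uᵀ * U = 1) :
    (U * Uᵀ) * (U * Uᵀ) = U * Uᵀ := by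
  rw [Matrix.mul_assoc, ← Matrix.mul_assoc Uᵀ U Uᵀ, hU, Matrix.one_mul]

private lemma aux_proj_trace {d k : ℕ} (U : Matrix (Fin d) (Fin k) ℝ) (hU : Uᵀ * U = 1) :
    Matrix.trace (U * Uᵀ) = k := by
  rw [Matrix.trace_mul_comm, hU, Matrix.trace_one]; simp

private lemma aux_det {d k : ℕ} (a b : ℝ) (hb : b ≠ 0) (hk : k ≤ d)
    (U : Matrix (Fin d) (Fin k) ℝ) (hU : Uᵀ * U = 1) :
    (a • (U * Uᵀ) + b • (1 : Matrix (Fin d) (Fin d) ℝ)).det = (a + b) ^ k * b ^ (d - k) := by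
  have h1 : a • (U * Uᵀ) + b • (1 : Matrix (Fin d) (Fin d) ℝ)
      = b • ((1 : Matrix (Fin d) (Fin d) ℝ) + ((a/b) • U) * Uᵀ) := by
    rw [Matrix.smul_mul]
    match_scalars <;> field_simp
  rw [h1, Matrix.det_smul, Matrix.det_one_add_mul_comm]
  have h2 : (1 : Matrix (Fin k) (Fin k) ℝ) + Uᵀ * ((a/b) • U) = (1 + a/b) • 1 := by
    rw [Matrix.mul_smul, hU, add_smul, one_smul]
  rw [h2, Matrix.det_smul, Matrix.det_one, mul_one]
  simp only [Fintype.card_fin]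
  have hsplit : b ^ d = b ^ k * b ^ (d - k) := by rw [← pow_add]; congr 1; omega
  rw [hsplit]
  have key : (1 + a / b) ^ k * b ^ k = (a + b) ^ k := by
    rw [← mul_pow]
    congr 1
    field_simp
    ring
  set t := (1 + a / b) ^ k
  linear_combination b ^ (d - k) * key

private lemma aux_inv {d : ℕ} (a b : ℝ) (ha : 0 ≤ a) (hb : 0 < b)
    (P : Matrix (Fin d) (Fin d) ℝ) (hPP : P * P = P) :
    (a • P + b • (1 : Matrix (Fin d) (Fin d) ℝ))⁻¹
      = b⁻¹ • ((1 : Matrix (Fin d) (Fin d) ℝ) - (a/(a+b)) • P) := by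
  have hab : a + b ≠ 0 := by positivity
  have hb' : b ≠ 0 := ne_of_gt hb
  apply Matrix.inv_eq_right_inv
  rw [Matrix.mul_smul]
  have expand : (a • P + b • (1 : Matrix (Fin d) (Fin d) ℝ)) * (1 - (a/(a+b)) • P)
      = b • 1 := by
    simp only [mul_sub, add_mul, mul_one, Matrix.smul_mul, Matrix.mul_smul,
      Matrix.one_mul, smul_smul, hPP]
    match_scalars <;> field_simp <;> ring
  rw [expand, smul_smul, inv_mul_cancel₀ hb', one_smul]

private lemma aux_trace {d : ℕ} (a b c : ℝ) (P Q : Matrix (Fin d) (Fin d) ℝ)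
    (trP trQ : ℝ) (hP : Matrix.trace P = trP) (hQ : Matrix.trace Q = trQ) :
    Matrix.trace ((b⁻¹ • ((1 : Matrix (Fin d) (Fin d) ℝ) - c • P)) * (a • Q + b • 1))
      = b⁻¹ * (a * trQ + b * d - (c * a * Matrix.trace (P * Q) + c * b * trP)) := by
  simp only [Matrix.smul_mul, sub_mul, Matrix.one_mul, mul_add, Matrix.mul_smul,
    Matrix.mul_one, smul_smul, smul_sub, smul_add]
  simp [Matrix.trace_smul, Matrix.trace_add, Matrix.trace_sub, Matrix.trace_one, hP, hQ]
  ring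

private lemma aux_sum_sq {d : ℕ} (A : Matrix (Fin d) (Fin d) ℝ) (hA : Aᵀ = A) :
    (∑ i, ∑ j, (A i j) ^ 2) = Matrix.trace (A * A) := by
  simp only [Matrix.trace, Matrix.diag, Matrix.mul_apply]
  refine Finset.sum_congr rfl fun i _ => Finset.sum_congr rfl fun j _ => ?_
  have : A j i = A i j := by conv_lhs => rw [← hA, Matrix.transpose_apply]
  rw [this, sq]

/-- For `σ ≥ 0`, `η > 0`, and `U, Û ∈ O_{d,k}`, with `Σ = σ²UUᵀ + η²I` and
`Σ̂ = σ²ÛÛᵀ + η²I`, one has `det Σ = det Σ̂ = (σ² + η²)^k (η²)^{d−k}` and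
`tr(Σ⁻¹Σ̂) − d = σ⁴‖UUᵀ − ÛÛᵀ‖_F² / (2(η²σ² + η⁴))`. -/
theorem stmt3 {d k : ℕ} (σ η : ℝ) (hσ : 0 ≤ σ) (hη : 0 < η)
    (U Uh : Matrix (Fin d) (Fin k) ℝ) (hU : Uᵀ * U = 1) (hUh : Uhᵀ * Uh = 1) :
    (σ ^ 2 • (U * Uᵀ) + η ^ 2 • (1 : Matrix (Fin d) (Fin d) ℝ)).det
        = (σ ^ 2 + η ^ 2) ^ k * (η ^ 2) ^ (d - k)
    ∧ (σ ^ 2 • (Uh * Uhᵀ) + η ^ 2 • (1 : Matrix (Fin d) (Fin d) ℝ)).det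
        = (σ ^ 2 + η ^ 2) ^ k * (η ^ 2) ^ (d - k)
    ∧ Matrix.trace ((σ ^ 2 • (U * Uᵀ) + η ^ 2 • (1 : Matrix (Fin d) (Fin d) ℝ))⁻¹ *
          (σ ^ 2 • (Uh * Uhᵀ) + η ^ 2 • (1 : Matrix (Fin d) (Fin d) ℝ))) - d
        = σ ^ 4 * (∑ i, ∑ j, ((U * Uᵀ - Uh * Uhᵀ) i j) ^ 2) /
            (2 * (η ^ 2 * σ ^ 2 + η ^ 4)) := by
  have hb : (0:ℝ) < η ^ 2 := by positivity
  have hb' : (η:ℝ) ^ 2 ≠ 0 := ne_of_gt hb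
  have ha : (0:ℝ) ≤ σ ^ 2 := sq_nonneg σ
  have hab : σ ^ 2 + η ^ 2 ≠ 0 := by positivity
  have hkd : k ≤ d := aux_k_le_d U hU
  refine ⟨aux_det _ _ hb' hkd U hU, aux_det _ _ hb' hkd Uh hUh, ?_⟩
  set P := U * Uᵀ with hPdef
  set Q := Uh * Uhᵀ with hQdef
  have hPP : P * P = P := aux_proj_idem U hU
  have htrP : Matrix.trace P = k := aux_proj_trace U hU
  have hQQ : Q * Q = Q := aux_proj_idem Uh hUh
  have htrQ : Matrix.trace Q = k := aux_proj_trace Uh hUh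
  rw [aux_inv _ _ ha hb P hPP,
    aux_trace (σ ^ 2) (η ^ 2) (σ ^ 2 / (σ ^ 2 + η ^ 2)) P Q _ _ htrP htrQ]
  have hsymm : (P - Q)ᵀ = P - Q := by
    rw [Matrix.transpose_sub, hPdef, hQdef, Matrix.transpose_mul, Matrix.transpose_transpose,
      Matrix.transpose_mul, Matrix.transpose_transpose]
  rw [aux_sum_sq (P - Q) hsymm]
  have hexp : Matrix.trace ((P - Q) * (P - Q))
      = 2 * (k : ℝ) - 2 * Matrix.trace (P * Q) := by
    simp only [Matrix.sub_mul, Matrix.mul_sub, Matrix.trace_sub, hPP, hQQ, htrP, htrQ]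
    rw [Matrix.trace_mul_comm Q P]
    ring
  rw [hexp]
  set s := Matrix.trace (P * Q)
  field_simp
  ring
end

section
/- Truncation bias bound: Let Z be a random matrix in R^{d₁×d₂} with E[Z] = 0, and suppose R, p, σ are nonnegative reals with Pr[‖Z‖ ≥ R] ≤ p and max{‖E[Z Z^T]‖, ‖E[Z^T Z]‖} ≤ σ². Define Z' = Z·1(‖Z‖ ≤ R). Then ‖E[Z']‖ ≤ σ√p, where ‖·‖ is the spectral norm. -/
/-!
Because `E[Z] = 0`, the truncated mean `E[Z 1(‖Z‖ ≤ R)]` equals `-E[Z 1_E]` with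
`E = {‖Z‖ > R}`, an event of probability at most `p`. For vectors `u, v`, Cauchy–Schwarz gives
`⟪u, E[Z 1_E] v⟫² = E[⟪u, Z v⟫ 1_E]² ≤ Pr(E) · E[⟪u, Z v⟫²]`, and pointwise
`⟪u, Z v⟫² = ⟪Zᵀ u, v⟫² ≤ ⟪u, Z Zᵀ u⟫ ‖v‖²`, whose expectation is at most `σ² ‖u‖² ‖v‖²`.
-/

open MeasureTheory Matrix

open scoped InnerProductSpace

section
variable {m n : ℕ} {Ω : Type*} [MeasurableSpace Ω] {μ : Measure Ω}

lemma inner_toEuclideanLin_eq_sum (A : Matrix (Fin m) (Fin n) ℝ) (u : EuclideanSpace ℝ (Fin m))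
    (v : EuclideanSpace ℝ (Fin n)) :
    ⟪u, toEuclideanLin A v⟫_ℝ = ∑ i, ∑ j, u i * A i j * v j := by
  simp only [PiLp.inner_apply, toLpLin_apply, mulVec, dotProduct, RCLike.inner_apply, conj_trivial,
    Finset.sum_mul]
  exact Finset.sum_congr rfl fun _ _ => Finset.sum_congr rfl fun _ _ => by ring

lemma inner_toEuclideanLin_le_specNorm (A : Matrix (Fin m) (Fin n) ℝ)
    (u : EuclideanSpace ℝ (Fin m)) (v : EuclideanSpace ℝ (Fin n)) :
    ⟪u, toEuclideanLin A v⟫_ℝ ≤ specNorm A * ‖u‖ * ‖v‖ :=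
  calc ⟪u, toEuclideanLin A v⟫_ℝ ≤ ‖u‖ * ‖toEuclideanLin A v‖ := real_inner_le_norm _ _
    _ ≤ ‖u‖ * (specNorm A * ‖v‖) :=
      mul_le_mul_of_nonneg_left ((LinearMap.toContinuousLinearMap _).le_opNorm v) (norm_nonneg u)
    _ = specNorm A * ‖u‖ * ‖v‖ := by ring

lemma specNorm_le_of_inner_le {A : Matrix (Fin m) (Fin n) ℝ} {c : ℝ} (hc : 0 ≤ c)
    (h : ∀ u v, ⟪u, toEuclideanLin A v⟫_ℝ ≤ c * ‖u‖ * ‖v‖) : specNorm A ≤ c := by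
  refine ContinuousLinearMap.opNorm_le_bound _ hc fun v => ?_
  have hAv := h (toEuclideanLin A v) v
  rw [real_inner_self_eq_norm_sq] at hAv
  rcases (norm_nonneg (toEuclideanLin A v)).eq_or_lt with h0 | hpos
  · simp only [LinearMap.coe_toContinuousLinearMap', ← h0]
    positivity
  · simpa using le_of_mul_le_mul_left (by linarith) hpos

lemma sq_inner_toEuclideanLin_le (A : Matrix (Fin m) (Fin n) ℝ) (u : EuclideanSpace ℝ (Fin m))
    (v : EuclideanSpace ℝ (Fin n)) :
    ⟪u, toEuclideanLin A v⟫_ℝ ^ 2 ≤ ⟪u, toEuclideanLin (A * Aᵀ) u⟫_ℝ * ‖v‖ ^ 2 := by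
  have hadj : ∀ w, ⟪u, toEuclideanLin A w⟫_ℝ = ⟪toEuclideanLin Aᵀ u, w⟫_ℝ := fun w => by
    rw [← conjTranspose_eq_transpose_of_trivial, toEuclideanLin_conjTranspose_eq_adjoint,
      LinearMap.adjoint_inner_left]
  have hmul : toEuclideanLin (A * Aᵀ) u = toEuclideanLin A (toEuclideanLin Aᵀ u) := by
    simp [toLpLin_apply, mulVec_mulVec]
  rw [hmul, hadj, hadj, real_inner_self_eq_norm_sq, ← mul_pow, ← sq_abs]
  exact pow_le_pow_left₀ (abs_nonneg _) (abs_real_inner_le_norm _ _) 2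

lemma specNorm_neg (A : Matrix (Fin m) (Fin n) ℝ) : specNorm (-A) = specNorm A := by
  simp [specNorm]

lemma continuous_specNorm : Continuous (specNorm : Matrix (Fin m) (Fin n) ℝ → ℝ) :=
  continuous_norm.comp <| LinearMap.continuous_of_finiteDimensional
    (toEuclideanLin.trans LinearMap.toContinuousLinearMap :
      Matrix (Fin m) (Fin n) ℝ ≃ₗ[ℝ] _).toLinearMap

lemma measurable_specNorm_of_measurable_entries {Z : Ω → Matrix (Fin m) (Fin n) ℝ}
    (hZ : ∀ i j, Measurable fun ω => Z ω i j) : Measurable fun ω => specNorm (Z ω) := by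
  have hcont : Continuous fun A : Fin m → Fin n → ℝ => specNorm (of A) := continuous_specNorm
  exact hcont.measurable.comp (measurable_pi_lambda _ fun i => measurable_pi_lambda _ (hZ i))

lemma integrable_inner_toEuclideanLin {Z : Ω → Matrix (Fin m) (Fin n) ℝ}
    (hZ : ∀ i j, Integrable (fun ω => Z ω i j) μ) (u : EuclideanSpace ℝ (Fin m))
    (v : EuclideanSpace ℝ (Fin n)) :
    Integrable (fun ω => ⟪u, toEuclideanLin (Z ω) v⟫_ℝ) μ := by
  simp_rw [inner_toEuclideanLin_eq_sum]
  exact integrable_finsetSum _ fun i _ => integrable_finsetSum _ fun j _ =>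
    ((hZ i j).const_mul (u i)).mul_const (v j)

lemma inner_toEuclideanLin_integral {Z : Ω → Matrix (Fin m) (Fin n) ℝ}
    (hZ : ∀ i j, Integrable (fun ω => Z ω i j) μ) (u : EuclideanSpace ℝ (Fin m))
    (v : EuclideanSpace ℝ (Fin n)) :
    ⟪u, toEuclideanLin (of fun i j => ∫ ω, Z ω i j ∂μ) v⟫_ℝ =
      ∫ ω, ⟪u, toEuclideanLin (Z ω) v⟫_ℝ ∂μ := by
  have hterm : ∀ i j, Integrable (fun ω => u i * Z ω i j * v j) μ := fun i j =>
    ((hZ i j).const_mul (u i)).mul_const (v j)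
  simp_rw [inner_toEuclideanLin_eq_sum]
  rw [integral_finsetSum _ fun i _ => integrable_finsetSum _ fun j _ => hterm i j]
  refine Finset.sum_congr rfl fun i _ => ?_
  rw [integral_finsetSum _ fun j _ => hterm i j]
  simp [integral_mul_const, integral_const_mul]

/-- Cauchy–Schwarz against the constant `1`, via the discriminant of `x ↦ ∫ (x + f)²`. -/
lemma sq_integral_le_measureReal_univ_mul [IsFiniteMeasure μ] {f : Ω → ℝ} (hf : MemLp f 2 μ) :
    (∫ ω, f ω ∂μ) ^ 2 ≤ μ.real Set.univ * ∫ ω, f ω ^ 2 ∂μ := by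
  have hf1 : Integrable f μ := hf.integrable one_le_two
  have hquad : ∀ x : ℝ,
      0 ≤ μ.real Set.univ * (x * x) + 2 * (∫ ω, f ω ∂μ) * x + ∫ ω, f ω ^ 2 ∂μ := fun x =>
    calc 0 ≤ ∫ ω, (x * x + (2 * x) * f ω + f ω ^ 2) ∂μ :=
          integral_nonneg fun ω => show (0 : ℝ) ≤ _ by nlinarith [sq_nonneg (x + f ω)]
      _ = _ := by
        rw [integral_add (by fun_prop) hf.integrable_sq, integral_add (by fun_prop) (by fun_prop),
          integral_const, integral_const_mul, smul_eq_mul]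
        ring
  have := discrim_le_zero hquad
  rw [discrim] at this
  linarith

theorem specNorm_setIntegral_le_sqrt [IsFiniteMeasure μ] {Z : Ω → Matrix (Fin m) (Fin n) ℝ}
    (hZ : ∀ i j, Integrable (fun ω => Z ω i j) μ)
    (hZZ : ∀ i j, Integrable (fun ω => (Z ω * (Z ω)ᵀ) i j) μ) (s : Set Ω) :
    specNorm (of fun i j => ∫ ω in s, Z ω i j ∂μ) ≤
      √(specNorm (of fun i j => ∫ ω, (Z ω * (Z ω)ᵀ) i j ∂μ) * μ.real s) := by
  set W := of fun i j => ∫ ω, (Z ω * (Z ω)ᵀ) i j ∂μ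
  refine specNorm_le_of_inner_le (Real.sqrt_nonneg _) fun u v => ?_
  set f := fun ω => ⟪u, toEuclideanLin (Z ω) v⟫_ℝ
  have hbound : ∀ ω, f ω ^ 2 ≤ ⟪u, toEuclideanLin (Z ω * (Z ω)ᵀ) u⟫_ℝ * ‖v‖ ^ 2 := fun ω =>
    sq_inner_toEuclideanLin_le _ _ _
  have hmajor := (integrable_inner_toEuclideanLin hZZ u u).mul_const (‖v‖ ^ 2)
  have hf : MemLp f 2 μ :=
    (memLp_two_iff_integrable_sq (integrable_inner_toEuclideanLin hZ u v).aestronglyMeasurable).2 <|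
      hmajor.mono' ((integrable_inner_toEuclideanLin hZ u v).aestronglyMeasurable.pow 2) <|
        ae_of_all _ fun ω => (Real.norm_of_nonneg (sq_nonneg _)).trans_le (hbound ω)
  have hsecond : ∫ ω, f ω ^ 2 ∂μ ≤ specNorm W * ‖u‖ ^ 2 * ‖v‖ ^ 2 :=
    calc ∫ ω, f ω ^ 2 ∂μ ≤ ∫ ω, ⟪u, toEuclideanLin (Z ω * (Z ω)ᵀ) u⟫_ℝ * ‖v‖ ^ 2 ∂μ :=
          integral_mono hf.integrable_sq hmajor hbound
      _ = ⟪u, toEuclideanLin W u⟫_ℝ * ‖v‖ ^ 2 := by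
          rw [integral_mul_const, inner_toEuclideanLin_integral hZZ]
      _ ≤ specNorm W * ‖u‖ * ‖u‖ * ‖v‖ ^ 2 :=
          mul_le_mul_of_nonneg_right (inner_toEuclideanLin_le_specNorm _ _ _) (sq_nonneg _)
      _ = specNorm W * ‖u‖ ^ 2 * ‖v‖ ^ 2 := by ring
  have hcs : (∫ ω in s, f ω ∂μ) ^ 2 ≤ μ.real s * (specNorm W * ‖u‖ ^ 2 * ‖v‖ ^ 2) :=
    calc (∫ ω in s, f ω ∂μ) ^ 2 ≤ μ.real s * ∫ ω in s, f ω ^ 2 ∂μ := by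
          simpa using sq_integral_le_measureReal_univ_mul (hf.restrict s)
      _ ≤ μ.real s * (specNorm W * ‖u‖ ^ 2 * ‖v‖ ^ 2) :=
          mul_le_mul_of_nonneg_left ((setIntegral_le_integral hf.integrable_sq
            (ae_of_all _ fun _ => sq_nonneg _)).trans hsecond) measureReal_nonneg
  rw [inner_toEuclideanLin_integral fun i j => (hZ i j).integrableOn]
  calc ∫ ω in s, f ω ∂μ ≤ √(μ.real s * (specNorm W * ‖u‖ ^ 2 * ‖v‖ ^ 2)) :=
        (le_abs_self _).trans (Real.abs_le_sqrt hcs)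
    _ = √(specNorm W * μ.real s) * ‖u‖ * ‖v‖ := by
        rw [show μ.real s * (specNorm W * ‖u‖ ^ 2 * ‖v‖ ^ 2) =
            specNorm W * μ.real s * (‖u‖ * ‖v‖) ^ 2 by ring,
          Real.sqrt_mul' _ (sq_nonneg _), Real.sqrt_sq (by positivity), mul_assoc]
end

theorem stmt7_general {d₁ d₂ : ℕ} {Ω : Type*} [MeasurableSpace Ω]
    (μ : Measure Ω) [IsProbabilityMeasure μ]
    (Z : Ω → Matrix (Fin d₁) (Fin d₂) ℝ)
    (hmeas : ∀ i j, Measurable fun ω => Z ω i j)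
    (hint : ∀ i j, Integrable (fun ω => Z ω i j) μ)
    (hint2 : ∀ i j, Integrable (fun ω => (Z ω * (Z ω)ᵀ) i j) μ)
    (hmean : ∀ i j, (∫ ω, Z ω i j ∂μ) = 0)
    (R p σ : ℝ) (hσ : 0 ≤ σ)
    (htail : (μ {ω | R ≤ specNorm (Z ω)}).toReal ≤ p)
    (hvar1 : specNorm (Matrix.of fun i j => ∫ ω, (Z ω * (Z ω)ᵀ) i j ∂μ) ≤ σ ^ 2) :
    specNorm (Matrix.of fun i j =>
        ∫ ω, (if specNorm (Z ω) ≤ R then Z ω i j else 0) ∂μ) ≤ σ * Real.sqrt p := by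
  set S := {ω | specNorm (Z ω) ≤ R}
  have hS : MeasurableSet S :=
    measurableSet_le (measurable_specNorm_of_measurable_entries hmeas) measurable_const
  have htrunc : (of fun i j => ∫ ω, (if specNorm (Z ω) ≤ R then Z ω i j else 0) ∂μ) =
      -of fun i j => ∫ ω in Sᶜ, Z ω i j ∂μ := by
    ext i j
    have hsplit := integral_add_compl hS (hint i j)
    rw [hmean, ← integral_indicator hS] at hsplit
    exact eq_neg_of_add_eq_zero_left hsplit
  have hSc : μ.real Sᶜ ≤ p :=
    (measureReal_mono fun ω (hω : ¬ specNorm (Z ω) ≤ R) => (not_le.1 hω).le).trans htail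
  rw [htrunc, specNorm_neg]
  calc _ ≤ √(specNorm (of fun i j => ∫ ω, (Z ω * (Z ω)ᵀ) i j ∂μ) * μ.real Sᶜ) :=
        specNorm_setIntegral_le_sqrt hint hint2 Sᶜ
    _ ≤ √(σ ^ 2 * p) := Real.sqrt_le_sqrt (mul_le_mul hvar1 hSc measureReal_nonneg (sq_nonneg σ))
    _ = σ * √p := by rw [Real.sqrt_mul (sq_nonneg σ), Real.sqrt_sq hσ]

/-- Truncation bias bound. Let `Z` be a mean-zero random matrix in
`ℝ^{d₁×d₂}` with `Pr[‖Z‖ ≥ R] ≤ p` and `max{‖E[ZZᵀ]‖, ‖E[ZᵀZ]‖} ≤ σ²`. Define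
`Z' = Z·1(‖Z‖ ≤ R)`. Then `‖E[Z']‖ ≤ σ √p` (spectral norms, entrywise expectations). -/
theorem stmt7 {d₁ d₂ : ℕ} {Ω : Type*} [MeasurableSpace Ω]
    (μ : Measure Ω) [IsProbabilityMeasure μ]
    (Z : Ω → Matrix (Fin d₁) (Fin d₂) ℝ)
    (hmeas : ∀ i j, Measurable fun ω => Z ω i j)
    (hint : ∀ i j, Integrable (fun ω => Z ω i j) μ)
    (hint2 : ∀ i j, Integrable (fun ω => (Z ω * (Z ω)ᵀ) i j) μ)
    (hint2' : ∀ i j, Integrable (fun ω => ((Z ω)ᵀ * Z ω) i j) μ)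
    (hmean : ∀ i j, (∫ ω, Z ω i j ∂μ) = 0)
    (R p σ : ℝ) (hR : 0 ≤ R) (hp : 0 ≤ p) (hσ : 0 ≤ σ)
    (htail : (μ {ω | R ≤ specNorm (Z ω)}).toReal ≤ p)
    (hvar1 : specNorm (Matrix.of fun i j => ∫ ω, (Z ω * (Z ω)ᵀ) i j ∂μ) ≤ σ ^ 2)
    (hvar2 : specNorm (Matrix.of fun i j => ∫ ω, ((Z ω)ᵀ * Z ω) i j ∂μ) ≤ σ ^ 2) :
    specNorm (Matrix.of fun i j =>
        ∫ ω, (if specNorm (Z ω) ≤ R then Z ω i j else 0) ∂μ) ≤ σ * Real.sqrt p :=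
  stmt7_general μ Z hmeas hint hint2 hmean R p σ hσ htail hvar1
end

section
/- If X_1, ..., X_n are independent real random variables where X_i has sub-Gaussian constant b_i (meaning E[|X_i − E[X_i]|^p]^{1/p} ≤ b_i √p for all p ≥ 1), then ∑_{i=1}^n X_i has sub-Gaussian constant C·√(∑_{i=1}^n b_i²) for some absolute constant C. -/
open MeasureTheory ProbabilityTheory

/-- A real random variable `X` has sub-Gaussian constant `b ≥ 0` (w.r.t. the probability
measure `μ`) if all its centered absolute moments exist and satisfy
`E[|X − E[X]|^p]^(1/p) ≤ b √p` for every real `p ≥ 1`. -/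
def HasSubgaussianConst {Ω : Type*} [MeasurableSpace Ω] (μ : Measure Ω)
    (X : Ω → ℝ) (b : ℝ) : Prop :=
  ∀ p : ℝ, 1 ≤ p →
    Integrable (fun ω => |X ω - ∫ x, X x ∂μ| ^ p) μ ∧
    (∫ ω, |X ω - ∫ x, X x ∂μ| ^ p ∂μ) ^ (1 / p) ≤ b * Real.sqrt p

/-!
Moment bounds and moment generating function bounds are equivalent up to absolute constants:
the even moments `E[Y^{2k}] ≤ (2k b²)^k` of a centered `Y` give `E[exp(r Y²)] ≤ exp(4e r b²)`
for small `r` by expanding the exponential, and from this `E[exp(tY)] ≤ exp(14 b² t²)`,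
i.e. `Y` has a sub-Gaussian moment generating function with variance proxy `28 b²`.
Variance proxies add up over independent summands, and conversely a variance proxy `c`
gives `E|Z|^p ≤ 2 (√(cp))^p` by the Chernoff-type bound `x^p ≤ (p/t)^p e^{tx-p}`
at `t = √(p/c)`.
-/

open Real
open scoped NNReal Nat

namespace Real

lemma exp_le_add_exp_sq (x : ℝ) : exp x ≤ x + exp (x ^ 2) := by
  have hsq : x ^ 2 + 1 ≤ exp (x ^ 2) := add_one_le_exp _
  rcases le_or_gt 1 |x| with hx | hx
  · rcases le_or_gt 0 x with h0 | h0
    · have : exp x ≤ exp (x ^ 2) := exp_le_exp.2 (by nlinarith [abs_of_nonneg h0])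
      linarith
    · have : exp x ≤ 1 := exp_le_one_iff.2 h0.le
      nlinarith [abs_of_neg h0]
  · nlinarith [abs_le.1 (abs_exp_sub_one_sub_id_le hx.le), sq_abs x]

lemma rpow_le_div_rpow_mul_exp {x t p : ℝ} (hx : 0 ≤ x) (ht : 0 < t) (hp : 0 < p) :
    x ^ p ≤ (p / t) ^ p * exp (t * x - p) := by
  rcases hx.eq_or_lt with rfl | hx
  · rw [zero_rpow hp.ne']
    positivity
  have hlog : log (t * x / p) ≤ t * x / p - 1 := log_le_sub_one_of_pos (by positivity)
  have hsplit : log x = log (p / t) + log (t * x / p) := by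
    rw [← log_mul (by positivity) (by positivity)]
    congr 1
    field_simp
  rw [rpow_def_of_pos hx, rpow_def_of_pos (by positivity), ← exp_add]
  refine exp_le_exp.2 ?_
  rw [hsplit]
  have := mul_le_mul_of_nonneg_left hlog hp.le
  rw [mul_sub, mul_div_cancel₀ _ hp.ne'] at this
  nlinarith

lemma inv_one_sub_le_exp_two_mul {u : ℝ} (hu0 : 0 ≤ u) (hu : u ≤ 1 / 2) :
    (1 - u)⁻¹ ≤ exp (2 * u) := by
  have h1u : 0 < 1 - u := by linarith
  calc (1 - u)⁻¹ ≤ 1 + 2 * u := by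
        rw [inv_le_iff_one_le_mul₀ h1u]
        nlinarith
    _ ≤ exp (2 * u) := by linarith [add_one_le_exp (2 * u)]

end Real

section

variable {Ω : Type*} [MeasurableSpace Ω] {μ : Measure Ω}

lemma MeasureTheory.integrable_and_integral_le_of_le {f g : Ω → ℝ}
    (hf : AEStronglyMeasurable f μ) (hf_nonneg : ∀ ω, 0 ≤ f ω) (hg : Integrable g μ)
    (hfg : ∀ ω, f ω ≤ g ω) :
    Integrable f μ ∧ ∫ ω, f ω ∂μ ≤ ∫ ω, g ω ∂μ :=
  ⟨hg.mono' hf (ae_of_all _ fun ω => by rw [norm_of_nonneg (hf_nonneg ω)]; exact hfg ω),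
    integral_mono_of_nonneg (ae_of_all _ hf_nonneg) hg (ae_of_all _ hfg)⟩

lemma MeasureTheory.integrable_and_hasSum_integral_of_nonneg
    {f : ℕ → Ω → ℝ} {g : Ω → ℝ}
    (hg : AEStronglyMeasurable g μ) (hfg : ∀ ω, HasSum (fun n => f n ω) (g ω))
    (hf_nonneg : ∀ n ω, 0 ≤ f n ω) (hf : ∀ n, Integrable (f n) μ)
    (hsum : Summable fun n => ∫ ω, f n ω ∂μ) :
    Integrable g μ ∧ HasSum (fun n => ∫ ω, f n ω ∂μ) (∫ ω, g ω ∂μ) := by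
  have hg_eq : g = fun ω => ∑' n, f n ω := funext fun ω => (hfg ω).tsum_eq.symm
  have hnorm : ∀ n, ∫ ω, ‖f n ω‖ ∂μ = ∫ ω, f n ω ∂μ := fun n =>
    integral_congr_ae (ae_of_all _ fun ω => Real.norm_of_nonneg (hf_nonneg n ω))
  refine ⟨⟨hg, ?_⟩, ?_⟩
  · rw [hasFiniteIntegral_iff_ofReal (ae_of_all _ fun ω => (hfg ω).nonneg (hf_nonneg · ω)),
      hg_eq]
    simp_rw [fun ω => ENNReal.ofReal_tsum_of_nonneg (hf_nonneg · ω) (hfg ω).summable]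
    rw [lintegral_tsum fun n => (hf n).1.aemeasurable.ennreal_ofReal]
    simp_rw [← ofReal_integral_eq_lintegral_ofReal (hf _) (ae_of_all _ (hf_nonneg _)),
      ← ENNReal.ofReal_tsum_of_nonneg (fun n => integral_nonneg (hf_nonneg n)) hsum]
    exact ENNReal.ofReal_lt_top
  · rw [hg_eq]
    exact hasSum_integral_of_summable_integral_norm hf (by simpa only [hnorm] using hsum)

section EvenMoments

variable {Y : Ω → ℝ} {b : ℝ}

lemma integral_exp_mul_sq_le (hY : AEMeasurable Y μ)
    (hmom : ∀ k : ℕ, Integrable (fun ω => Y ω ^ (2 * k)) μ ∧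
      ∫ ω, Y ω ^ (2 * k) ∂μ ≤ (2 * k * b ^ 2) ^ k)
    {r : ℝ} (hr : 0 ≤ r) (hrb : 4 * exp 1 * r * b ^ 2 ≤ 1) :
    Integrable (fun ω => exp (r * Y ω ^ 2)) μ ∧
      ∫ ω, exp (r * Y ω ^ 2) ∂μ ≤ exp (4 * exp 1 * r * b ^ 2) := by
  set u := 2 * exp 1 * r * b ^ 2 with hu
  have hu0 : 0 ≤ u := by positivity
  have hu1 : u < 1 := by linarith
  have hterm_eq : ∀ k : ℕ, (fun ω => (r * Y ω ^ 2) ^ k / k !) =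
      fun ω => r ^ k / k ! * Y ω ^ (2 * k) := fun k => funext fun ω => by ring
  have hterm_int : ∀ k : ℕ, Integrable (fun ω => (r * Y ω ^ 2) ^ k / k !) μ := fun k => by
    rw [hterm_eq]
    exact (hmom k).1.const_mul _
  have hterm_le : ∀ k : ℕ, ∫ ω, (r * Y ω ^ 2) ^ k / (k ! : ℝ) ∂μ ≤ u ^ k := fun k =>
    calc ∫ ω, (r * Y ω ^ 2) ^ k / (k ! : ℝ) ∂μ
          = r ^ k / k ! * ∫ ω, Y ω ^ (2 * k) ∂μ := by
          rw [hterm_eq, integral_const_mul]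
      _ ≤ r ^ k / k ! * (2 * k * b ^ 2) ^ k := by gcongr; exact (hmom k).2
      _ = (2 * r * b ^ 2) ^ k * ((k : ℝ) ^ k / k !) := by ring
      _ ≤ (2 * r * b ^ 2) ^ k * exp 1 ^ k := by
          gcongr
          simpa only [← exp_nat_mul, mul_one] using
            Real.pow_div_factorial_le_exp _ k.cast_nonneg k
      _ = u ^ k := by ring
  have hterm_nonneg : ∀ k ω, 0 ≤ (r * Y ω ^ 2) ^ k / k ! := fun k ω => by positivity
  obtain ⟨hint, hsum⟩ :=
    integrable_and_hasSum_integral_of_nonneg (g := fun ω => exp (r * Y ω ^ 2)) (by fun_prop)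
    (fun ω => by
      simpa only [exp_eq_exp_ℝ] using NormedSpace.expSeries_div_hasSum_exp (r * Y ω ^ 2))
    hterm_nonneg hterm_int
    ((summable_geometric_of_lt_one hu0 hu1).of_nonneg_of_le
      (fun k => integral_nonneg (hterm_nonneg k)) hterm_le)
  refine ⟨hint, ?_⟩
  calc ∫ ω, exp (r * Y ω ^ 2) ∂μ ≤ (1 - u)⁻¹ :=
        hasSum_le hterm_le hsum (hasSum_geometric_of_lt_one hu0 hu1)
    _ ≤ exp (2 * u) := inv_one_sub_le_exp_two_mul hu0 (by linarith)
    _ = exp (4 * exp 1 * r * b ^ 2) := by rw [hu]; ring_nf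

lemma hasSubgaussianMGF_of_integral_pow_le (hY : AEMeasurable Y μ) (hint : Integrable Y μ)
    (hmean : ∫ ω, Y ω ∂μ = 0)
    (hmom : ∀ k : ℕ, Integrable (fun ω => Y ω ^ (2 * k)) μ ∧
      ∫ ω, Y ω ^ (2 * k) ∂μ ≤ (2 * k * b ^ 2) ^ k) :
    HasSubgaussianMGF Y (28 * b ^ 2).toNNReal μ := by
  suffices key : ∀ t, Integrable (fun ω => exp (t * Y ω)) μ ∧
      ∫ ω, exp (t * Y ω) ∂μ ≤ exp (14 * b ^ 2 * t ^ 2) from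
    ⟨fun t => (key t).1, fun t => (key t).2.trans_eq <| by
      rw [Real.coe_toNNReal _ (by positivity)]; ring_nf⟩
  intro t
  have hdom : ∀ g : Ω → ℝ, Integrable g μ → (∀ ω, exp (t * Y ω) ≤ g ω) →
      Integrable (fun ω => exp (t * Y ω)) μ ∧
        ∫ ω, exp (t * Y ω) ∂μ ≤ ∫ ω, g ω ∂μ := fun _ =>
    integrable_and_integral_le_of_le (by fun_prop) fun ω => (exp_pos _).le
  have he : exp 1 < 2.7182818286 := exp_one_lt_d9
  rcases le_or_gt (4 * exp 1 * t ^ 2 * b ^ 2) 1 with hsmall | hlarge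
  · obtain ⟨hI, hE⟩ := integral_exp_mul_sq_le hY hmom (sq_nonneg t) hsmall
    obtain ⟨hint', hle⟩ := hdom (fun ω => t * Y ω + exp (t ^ 2 * Y ω ^ 2))
      ((hint.const_mul t).add hI) fun ω => by
        simpa only [mul_pow] using exp_le_add_exp_sq (t * Y ω)
    refine ⟨hint', hle.trans ?_⟩
    rw [integral_add (hint.const_mul t) hI, integral_const_mul, hmean, mul_zero, zero_add]
    exact hE.trans (exp_le_exp.2 (by nlinarith [sq_nonneg (t * b)]))
  · have hb : 0 < 4 * exp 1 * b ^ 2 := by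
      have : b ≠ 0 := by rintro rfl; norm_num at hlarge
      positivity
    -- `s` is the largest admissible `r`, giving `E[exp(s Y²)] ≤ e`; the factor `e` is then
    -- absorbed using `1 < 4e b² t²`.
    set s := (4 * exp 1 * b ^ 2)⁻¹
    have hs : s * (4 * exp 1 * b ^ 2) = 1 := inv_mul_cancel₀ hb.ne'
    obtain ⟨hI, hE⟩ := integral_exp_mul_sq_le (r := s) hY hmom (inv_pos.2 hb).le (by linarith)
    have hamgm : ∀ y : ℝ, t * y ≤ exp 1 * b ^ 2 * t ^ 2 + s * y ^ 2 := fun y => by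
      nlinarith [mul_nonneg (inv_pos.2 hb).le (sq_nonneg (t - 2 * s * y))]
    obtain ⟨hint', hle⟩ := hdom _ (hI.const_mul (exp (exp 1 * b ^ 2 * t ^ 2))) fun ω => by
      rw [← exp_add]; exact exp_le_exp.2 (hamgm (Y ω))
    refine ⟨hint', hle.trans ?_⟩
    calc ∫ ω, exp (exp 1 * b ^ 2 * t ^ 2) * exp (s * Y ω ^ 2) ∂μ
        = exp (exp 1 * b ^ 2 * t ^ 2) * ∫ ω, exp (s * Y ω ^ 2) ∂μ := integral_const_mul _ _
      _ ≤ exp (exp 1 * b ^ 2 * t ^ 2) * exp 1 := by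
          gcongr
          exact hE.trans_eq (congrArg exp (by linarith))
      _ ≤ exp (14 * b ^ 2 * t ^ 2) := by
          rw [← exp_add]
          exact exp_le_exp.2 (by nlinarith [sq_nonneg (t * b)])

end EvenMoments

namespace HasSubgaussianConst

variable {X : Ω → ℝ} {b : ℝ}

lemma integrable [IsFiniteMeasure μ] (hX : AEStronglyMeasurable X μ)
    (h : HasSubgaussianConst μ X b) : Integrable X μ := by
  have habs : Integrable (fun ω => |X ω - ∫ x, X x ∂μ|) μ := by
    simpa only [rpow_one] using (h 1 le_rfl).1
  have hcent : Integrable (fun ω => X ω - ∫ x, X x ∂μ) μ :=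
    (integrable_norm_iff (hX.sub aestronglyMeasurable_const)).1 habs
  simpa using (integrable_add_const_iff (c := ∫ x, X x ∂μ)).2 hcent

lemma integral_rpow_le (h : HasSubgaussianConst μ X b) {p : ℝ} (hp : 1 ≤ p) :
    ∫ ω, |X ω - ∫ x, X x ∂μ| ^ p ∂μ ≤ (b * √p) ^ p := by
  have hp0 : 0 < p := by linarith
  have hI : 0 ≤ ∫ ω, |X ω - ∫ x, X x ∂μ| ^ p ∂μ :=
    integral_nonneg fun ω => by positivity
  have hle := (h p hp).2
  rw [one_div] at hle
  exact (rpow_inv_le_iff_of_pos hI ((rpow_nonneg hI _).trans hle) hp0).1 hle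

lemma integrable_pow_and_integral_pow_le [IsProbabilityMeasure μ]
    (h : HasSubgaussianConst μ X b) (k : ℕ) :
    Integrable (fun ω => (X ω - ∫ x, X x ∂μ) ^ (2 * k)) μ ∧
      ∫ ω, (X ω - ∫ x, X x ∂μ) ^ (2 * k) ∂μ ≤ (2 * k * b ^ 2) ^ k := by
  rcases k.eq_zero_or_pos with rfl | hk
  · simp
  have hp : (1 : ℝ) ≤ (2 * k : ℕ) := by exact_mod_cast (by omega : 1 ≤ 2 * k)
  have habs : ∀ ω,
      |X ω - ∫ x, X x ∂μ| ^ ((2 * k : ℕ) : ℝ) = (X ω - ∫ x, X x ∂μ) ^ (2 * k) :=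
    fun ω => by rw [rpow_natCast, (even_two_mul k).pow_abs]
  have hint := (h _ hp).1
  have hle := h.integral_rpow_le hp
  simp_rw [habs] at hint hle
  refine ⟨hint, hle.trans_eq ?_⟩
  rw [rpow_natCast, pow_mul, mul_pow, sq_sqrt (by positivity)]
  push_cast
  ring

lemma hasSubgaussianMGF [IsProbabilityMeasure μ] (hX : AEMeasurable X μ)
    (h : HasSubgaussianConst μ X b) :
    HasSubgaussianMGF (fun ω => X ω - ∫ x, X x ∂μ) (28 * b ^ 2).toNNReal μ := by
  have hint := h.integrable hX.aestronglyMeasurable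
  refine hasSubgaussianMGF_of_integral_pow_le (by fun_prop) (hint.sub (integrable_const _)) ?_
    h.integrable_pow_and_integral_pow_le
  rw [integral_sub hint (integrable_const _), integral_const, probReal_univ, one_smul, sub_self]

end HasSubgaussianConst

lemma ProbabilityTheory.HasSubgaussianMGF.integral_abs_rpow_le {Z : Ω → ℝ} {c : ℝ≥0}
    (h : HasSubgaussianMGF Z c μ) {p : ℝ} (hp : 0 < p) :
    ∫ ω, |Z ω| ^ p ∂μ ≤ 2 * (√c * √p) ^ p := by
  rcases eq_zero_or_pos c with rfl | hc
  · have hZ : (fun ω => |Z ω| ^ p) =ᵐ[μ] 0 :=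
      h.ae_eq_zero_of_hasSubgaussianMGF_zero.mono fun ω hω => by simp [hω, zero_rpow hp.ne']
    simp [integral_congr_ae hZ, zero_rpow hp.ne']
  set t := √p / √c with ht_def
  have hc' : 0 < √(c : ℝ) := sqrt_pos.2 (NNReal.coe_pos.2 hc)
  have ht : 0 < t := by positivity
  have hpt : p / t = √c * √p := by
    rw [ht_def]
    field_simp
    rw [sq_sqrt hp.le]
  have htc : (c : ℝ) * t ^ 2 / 2 = p / 2 := by
    rw [ht_def, div_pow, sq_sqrt hp.le, sq_sqrt c.coe_nonneg]
    field_simp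
  have hexp_int : ∀ s, Integrable (fun ω => exp (s * Z ω)) μ := h.integrable_exp_mul
  have hpoint : ∀ ω, |Z ω| ^ p ≤
      (p / t) ^ p * exp (-p) * (exp (t * Z ω) + exp (-t * Z ω)) := fun ω => by
    calc |Z ω| ^ p ≤ (p / t) ^ p * exp (t * |Z ω| - p) :=
          rpow_le_div_rpow_mul_exp (abs_nonneg _) ht hp
      _ = (p / t) ^ p * exp (-p) * exp |t * Z ω| := by
          rw [abs_mul, abs_of_pos ht, mul_assoc, ← exp_add]; ring_nf
      _ ≤ (p / t) ^ p * exp (-p) * (exp (t * Z ω) + exp (-t * Z ω)) := by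
          rw [neg_mul]; gcongr; exact exp_abs_le _
  calc ∫ ω, |Z ω| ^ p ∂μ
      ≤ ∫ ω, (p / t) ^ p * exp (-p) * (exp (t * Z ω) + exp (-t * Z ω)) ∂μ :=
        integral_mono_of_nonneg (ae_of_all _ fun ω => by positivity)
          (((hexp_int t).add (hexp_int (-t))).const_mul _) (ae_of_all _ hpoint)
    _ = (p / t) ^ p * exp (-p) * (mgf Z μ t + mgf Z μ (-t)) := by
        rw [integral_const_mul, integral_add (hexp_int t) (hexp_int (-t))]; rfl
    _ ≤ (p / t) ^ p * exp (-p) * (exp (c * t ^ 2 / 2) + exp (c * (-t) ^ 2 / 2)) := by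
        gcongr <;> exact h.mgf_le _
    _ = 2 * (p / t) ^ p * exp (-(p / 2)) := by
        have : exp (-p) * exp (p / 2) = exp (-(p / 2)) := by rw [← exp_add]; ring_nf
        rw [neg_sq, htc]
        linear_combination 2 * (p / t) ^ p * this
    _ ≤ 2 * (√c * √p) ^ p := by
        rw [hpt]
        exact mul_le_of_le_one_right (by positivity) (exp_le_one_iff.2 (by linarith))

lemma hasSubgaussianConst_of_hasSubgaussianMGF {X : Ω → ℝ} {c : ℝ≥0}
    (h : HasSubgaussianMGF (fun ω => X ω - ∫ x, X x ∂μ) c μ) :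
    HasSubgaussianConst μ X (2 * √c) := by
  intro p hp
  have hp0 : 0 < p := by linarith
  refine ⟨?_, ?_⟩
  · simpa [hp0.le] using
      (h.memLp p.toNNReal).integrable_norm_rpow (by simpa using hp0) ENNReal.coe_ne_top
  calc (∫ ω, |X ω - ∫ x, X x ∂μ| ^ p ∂μ) ^ (1 / p)
      ≤ (2 * (√c * √p) ^ p) ^ (1 / p) := by
        gcongr
        exact h.integral_abs_rpow_le hp0
    _ = 2 ^ (1 / p) * (√c * √p) := by
        rw [mul_rpow (by norm_num) (by positivity), ← rpow_mul (by positivity),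
          mul_one_div_cancel hp0.ne', rpow_one]
    _ ≤ 2 * √c * √p := by
        rw [← mul_assoc]
        gcongr
        exact rpow_le_self_of_one_le (by norm_num) ((div_le_one hp0).2 hp)

end

/-- If `X_1, ..., X_n` are independent real random variables where `X_i` has
sub-Gaussian constant `b_i`, then `∑ X_i` has sub-Gaussian constant `C √(∑ b_i²)` for some
absolute constant `C`. -/
theorem stmt10 :
    ∃ C : ℝ, 0 < C ∧
      ∀ (n : ℕ) (Ω : Type) (_ : MeasurableSpace Ω) (μ : Measure Ω),
        IsProbabilityMeasure μ →
        ∀ (X : Fin n → Ω → ℝ) (b : Fin n → ℝ),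
          (∀ i, 0 ≤ b i) →
          (∀ i, Measurable (X i)) →
          iIndepFun X μ →
          (∀ i, HasSubgaussianConst μ (X i) (b i)) →
          HasSubgaussianConst μ (fun ω => ∑ i, X i ω)
            (C * Real.sqrt (∑ i, (b i) ^ 2)) := by
  refine ⟨2 * √28, by positivity, ?_⟩
  intro n Ω _ μ _ X b _ hXm hindep hX
  set Y : Fin n → Ω → ℝ := fun i ω => X i ω - ∫ x, X i x ∂μ
  have hsum : HasSubgaussianMGF (fun ω => ∑ i, Y i ω) (∑ i, (28 * b i ^ 2).toNNReal) μ :=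
    HasSubgaussianMGF.sum_of_iIndepFun
      (hindep.comp _ fun i => measurable_id.sub_const (∫ x, X i x ∂μ))
      fun i _ => (hX i).hasSubgaussianMGF (hXm i).aemeasurable
  have hcenter : (fun ω => ∑ i, Y i ω) =
      fun ω => ∑ i, X i ω - ∫ x, ∑ i, X i x ∂μ := by
    rw [integral_finsetSum _ fun i _ => (hX i).integrable (hXm i).aestronglyMeasurable]
    simp only [Y, Finset.sum_sub_distrib]
  rw [hcenter] at hsum
  convert hasSubgaussianConst_of_hasSubgaussianMGF hsum using 1
  rw [NNReal.coe_sum, Finset.sum_congr rfl fun i _ => Real.coe_toNNReal _ (by positivity),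
    ← Finset.mul_sum, sqrt_mul (by norm_num)]
  ring
end
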